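/- arXiv:1411.1339 — 2 statements merged into one kernel-verified Lean document; each statement's English description precedes it below -/
import Mathlib

section
/- Suppose x is a sequence for which lim_{n→∞} (log R_n(x))/g(n) = c, where g : ℕ → ℝ is increasing, g(n) → ∞, lim_{n→∞} g(n+1)/g(n) = 1, and c ∈ (0,∞). Then lim_{m→∞} (log m)/g(L_m(x)) = c. -/
open Filter Real

/-- `MatchAt x l n` : the block `x_1^n` equals the block `x_{-l+1}^{-l+n}`. -/
def MatchAt (x : ℤ → Bool) (l n : ℕ) : Prop :=
  ∀ i : ℕ, 1 ≤ i → i ≤ n → x (i : ℤ) = x ((i : ℤ) - (l : ℤ))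

/-- Recurrence time `R_n(x)`. -/
noncomputable def Rn (x : ℤ → Bool) (n : ℕ) : ℕ :=
  sInf {l : ℕ | 0 < l ∧ MatchAt x l n}

/-- Match length `L_m(x)`. -/
noncomputable def Lm (x : ℤ → Bool) (m : ℕ) : ℕ :=
  sSup {j : ℕ | 0 < j ∧ ∃ k : ℕ, 1 ≤ k ∧ k ≤ m ∧ MatchAt x k j}

theorem stmt_1 (x : ℤ → Bool)
    (hRwd : ∀ n : ℕ, {l : ℕ | 0 < l ∧ MatchAt x l n}.Nonempty)
    (hLwd : ∀ m : ℕ, BddAbove {j : ℕ | 0 < j ∧ ∃ k : ℕ, 1 ≤ k ∧ k ≤ m ∧ MatchAt x k j})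
    (g : ℕ → ℝ) (hg : Monotone g) (hgtop : Tendsto g atTop atTop)
    (hgratio : Tendsto (fun n => g (n + 1) / g n) atTop (nhds 1))
    (c : ℝ) (hc : 0 < c)
    (hlim : Tendsto (fun n => Real.logb 2 (Rn x n) / g n) atTop (nhds c)) :
    Tendsto (fun m : ℕ => Real.logb 2 (m : ℝ) / g (Lm x m)) atTop (nhds c) := by
  have hA : ∀ n, 0 < Rn x n ∧ MatchAt x (Rn x n) n := fun n => Nat.sInf_mem (hRwd n)
  have hB : ∀ n m : ℕ, 0 < n → Rn x n ≤ m → n ≤ Lm x m := by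
    intro n m hn hR
    exact le_csSup (hLwd m) ⟨hn, Rn x n, (hA n).1, hR, (hA n).2⟩
  have hC : Tendsto (Lm x) atTop atTop := by
    refine tendsto_atTop.2 fun b => eventually_atTop.2 ⟨Rn x (max b 1), fun m hm => ?_⟩
    exact le_trans (le_max_left b 1)
      (hB _ m (lt_of_lt_of_le one_pos (le_max_right b 1)) hm)
  have hD : ∀ m, Rn x 1 ≤ m → Rn x (Lm x m) ≤ m := by
    intro m hm
    have hne : {j : ℕ | 0 < j ∧ ∃ k, 1 ≤ k ∧ k ≤ m ∧ MatchAt x k j}.Nonempty :=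
      ⟨1, one_pos, Rn x 1, (hA 1).1, hm, (hA 1).2⟩
    obtain ⟨-, k, hk1, hkm, hmatch⟩ := Nat.sSup_mem hne (hLwd m)
    exact le_trans (Nat.sInf_le ⟨lt_of_lt_of_le one_pos hk1, hmatch⟩) hkm
  have hE : ∀ m, m < Rn x (Lm x m + 1) := by
    intro m
    by_contra h
    push_neg at h
    have := hB (Lm x m + 1) m (Nat.succ_pos _) h
    omega
  have hgpos : ∀ᶠ m in atTop, 0 < g (Lm x m) :=
    hC.eventually (hgtop.eventually_gt_atTop 0)
  have hlow : ∀ᶠ m in atTop,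
      logb 2 (Rn x (Lm x m)) / g (Lm x m) ≤ logb 2 (m : ℝ) / g (Lm x m) := by
    filter_upwards [hgpos, eventually_ge_atTop (Rn x 1)] with m hg1 hm
    have hR := hD m hm
    have hRpos : (0 : ℝ) < (Rn x (Lm x m) : ℝ) := by
      exact_mod_cast (hA (Lm x m)).1
    have hlog : logb 2 ((Rn x (Lm x m) : ℕ) : ℝ) ≤ logb 2 (m : ℝ) :=
      Real.logb_le_logb_of_le one_lt_two hRpos (by exact_mod_cast hR)
    gcongr
  have hup : ∀ᶠ m in atTop,
      logb 2 ((m : ℕ) : ℝ) / g (Lm x m) ≤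
        (logb 2 (Rn x (Lm x m + 1)) / g (Lm x m + 1)) *
          (g (Lm x m + 1) / g (Lm x m)) := by
    filter_upwards [hgpos, eventually_ge_atTop 1] with m hg1 h1
    have hg2 : 0 < g (Lm x m + 1) := lt_of_lt_of_le hg1 (hg (Nat.le_succ _))
    have hmpos : (0 : ℝ) < (m : ℝ) := by exact_mod_cast h1
    have hlog : logb 2 (m : ℝ) ≤ logb 2 ((Rn x (Lm x m + 1) : ℕ) : ℝ) :=
      Real.logb_le_logb_of_le one_lt_two hmpos (by exact_mod_cast (hE m).le)
    have heq : (logb 2 (Rn x (Lm x m + 1)) / g (Lm x m + 1)) *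
        (g (Lm x m + 1) / g (Lm x m)) =
        logb 2 (Rn x (Lm x m + 1)) / g (Lm x m) := by
      field_simp
    rw [heq]
    gcongr
  have hlowT : Tendsto (fun m => logb 2 (Rn x (Lm x m)) / g (Lm x m)) atTop (nhds c) :=
    hlim.comp hC
  have hupT : Tendsto (fun m =>
      (logb 2 (Rn x (Lm x m + 1)) / g (Lm x m + 1)) *
        (g (Lm x m + 1) / g (Lm x m))) atTop (nhds (c * 1)) :=
    ((hlim.comp (tendsto_add_atTop_nat 1)).comp hC).mul (hgratio.comp hC)
  rw [mul_one] at hupT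
  exact tendsto_of_tendsto_of_tendsto_of_le_of_le' hlowT hupT hlow hup
end

section
/- If a sequence x satisfies lim_{n→∞} (log R_n(x))/(log n) = 1, then lim_{m→∞} (log m)/(log L_m(x)) = 1. -/
open Filter Real

/-- Duality between recurrence time and match length. -/
lemma Rn_le_iff_le_Lm (x : ℤ → Bool)
    (hRwd : ∀ n : ℕ, {l : ℕ | 0 < l ∧ MatchAt x l n}.Nonempty)
    (hLwd : ∀ m : ℕ, BddAbove {j : ℕ | 0 < j ∧ ∃ k : ℕ, 1 ≤ k ∧ k ≤ m ∧ MatchAt x k j})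
    (m n : ℕ) (hn : 1 ≤ n) : Rn x n ≤ m ↔ n ≤ Lm x m := by
  constructor
  · intro h
    have hmem := Nat.sInf_mem (hRwd n)
    exact le_csSup (hLwd m) ⟨hn, Rn x n, hmem.1, h, hmem.2⟩
  · intro h
    have hne : {j : ℕ | 0 < j ∧ ∃ k : ℕ, 1 ≤ k ∧ k ≤ m ∧ MatchAt x k j}.Nonempty := by
      by_contra hc
      rw [Set.not_nonempty_iff_eq_empty] at hc
      have : Lm x m = 0 := by simp [Lm, hc]
      omega
    obtain ⟨hpos, k, hk1, hkm, hmatch⟩ := Nat.sSup_mem hne (hLwd m)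
    calc Rn x n ≤ k := Nat.sInf_le ⟨hk1, fun i h1 h2 => hmatch i h1 (h2.trans h)⟩
      _ ≤ m := hkm

theorem stmt_2 (x : ℤ → Bool)
    (hRwd : ∀ n : ℕ, {l : ℕ | 0 < l ∧ MatchAt x l n}.Nonempty)
    (hLwd : ∀ m : ℕ, BddAbove {j : ℕ | 0 < j ∧ ∃ k : ℕ, 1 ≤ k ∧ k ≤ m ∧ MatchAt x k j})
    (hlim : Tendsto (fun n => Real.logb 2 (Rn x n) / Real.logb 2 n) atTop (nhds 1)) :
    Tendsto (fun m : ℕ => Real.logb 2 (m : ℝ) / Real.logb 2 (Lm x m)) atTop (nhds 1) := by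
  have dual := Rn_le_iff_le_Lm x hRwd hLwd
  have Rpos : ∀ n, 0 < Rn x n := fun n => (Nat.sInf_mem (hRwd n)).1
  rw [Metric.tendsto_atTop] at hlim ⊢
  intro ε hε
  set δ : ℝ := min (ε / 4) 1 with hδdef
  have hδ : 0 < δ := lt_min (by linarith) one_pos
  have hδ1 : δ ≤ 1 := min_le_right _ _
  have hδε : δ ≤ ε / 4 := min_le_left _ _
  obtain ⟨N₁, hN₁⟩ := hlim δ hδ
  set C : ℕ := max (max N₁ 2) (⌈(2 : ℝ) ^ ((1 : ℝ) / δ)⌉₊ + 1) with hCdef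
  refine ⟨Rn x C, fun m hm => ?_⟩
  have hC1 : 1 ≤ C := le_trans (by norm_num) (le_trans (le_max_right N₁ 2) (le_max_left _ _))
  have hnC : C ≤ Lm x m := (dual m C hC1).mp hm
  set n := Lm x m with hn
  have hn2 : 2 ≤ n := le_trans (le_trans (le_max_right N₁ 2) (le_max_left _ _)) hnC
  have hnN₁ : N₁ ≤ n := le_trans (le_trans (le_max_left N₁ 2) (le_max_left _ _)) hnC
  have hnpos : (0 : ℝ) < (n : ℝ) := by positivity
  have hL1 : (1 : ℝ) ≤ Real.logb 2 (n : ℝ) := by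
    have : Real.logb 2 (2 : ℝ) ≤ Real.logb 2 (n : ℝ) :=
      Real.logb_le_logb_of_le (by norm_num) (by norm_num) (by exact_mod_cast hn2)
    simpa using this
  have hLpos : (0 : ℝ) < Real.logb 2 (n : ℝ) := lt_of_lt_of_le one_pos hL1
  have hLδ : (1 : ℝ) / δ ≤ Real.logb 2 (n : ℝ) := by
    have hceil : (⌈(2 : ℝ) ^ ((1 : ℝ) / δ)⌉₊ + 1 : ℕ) ≤ n :=
      le_trans (le_max_right _ _) hnC
    have h2n : (2 : ℝ) ^ ((1 : ℝ) / δ) ≤ (n : ℝ) := by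
      calc (2 : ℝ) ^ ((1 : ℝ) / δ) ≤ (⌈(2 : ℝ) ^ ((1 : ℝ) / δ)⌉₊ : ℝ) := Nat.le_ceil _
        _ ≤ (n : ℝ) := by exact_mod_cast le_trans (Nat.le_succ _) hceil
    calc (1 : ℝ) / δ = Real.logb 2 ((2 : ℝ) ^ ((1 : ℝ) / δ)) :=
          (Real.logb_rpow (by norm_num) (by norm_num)).symm
      _ ≤ Real.logb 2 (n : ℝ) :=
          Real.logb_le_logb_of_le (by norm_num) (Real.rpow_pos_of_pos (by norm_num) _) h2n
  have hδL : (1 : ℝ) ≤ δ * Real.logb 2 (n : ℝ) := by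
    rw [div_le_iff₀ hδ] at hLδ; linarith [hLδ]
  -- duality facts
  have hm1 : 1 ≤ m := le_trans (Rpos C) hm
  have hmpos : (0 : ℝ) < (m : ℝ) := by positivity
  have hRnm : Rn x n ≤ m := (dual m n (by omega)).mpr le_rfl
  have hmR : m < Rn x (n + 1) := by
    by_contra hc
    push_neg at hc
    have := (dual m (n + 1) (by omega)).mp hc
    omega
  -- bounds from hlim
  have h1 := hN₁ n hnN₁
  have h2 := hN₁ (n + 1) (by omega)
  rw [Real.dist_eq, abs_sub_lt_iff] at h1 h2
  have hL' : Real.logb 2 ((n : ℝ) + 1) ≤ 1 + Real.logb 2 (n : ℝ) := by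
    have h2n : ((n : ℝ) + 1) ≤ 2 * (n : ℝ) := by
      have : (1 : ℝ) ≤ (n : ℝ) := by exact_mod_cast le_trans (by norm_num) hn2
      linarith
    calc Real.logb 2 ((n : ℝ) + 1) ≤ Real.logb 2 (2 * (n : ℝ)) :=
          Real.logb_le_logb_of_le (by norm_num) (by positivity) h2n
      _ = Real.logb 2 2 + Real.logb 2 (n : ℝ) :=
          Real.logb_mul (by norm_num) (ne_of_gt hnpos)
      _ = 1 + Real.logb 2 (n : ℝ) := by simp
  have hL'pos : (0 : ℝ) < Real.logb 2 ((n : ℝ) + 1) := by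
    have : Real.logb 2 (2 : ℝ) ≤ Real.logb 2 ((n : ℝ) + 1) :=
      Real.logb_le_logb_of_le (by norm_num) (by norm_num)
        (by exact_mod_cast (by omega : 2 ≤ n + 1))
    have h1' : (1 : ℝ) ≤ Real.logb 2 ((n : ℝ) + 1) := by simpa using this
    linarith
  -- lower bound on logb m
  have hlow : (1 - δ) * Real.logb 2 (n : ℝ) < Real.logb 2 (m : ℝ) := by
    have ha : (1 - δ) * Real.logb 2 (n : ℝ) < Real.logb 2 (Rn x n : ℝ) := by
      have := h1.2
      rw [← lt_div_iff₀ hLpos]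
      linarith
    have hb : Real.logb 2 (Rn x n : ℝ) ≤ Real.logb 2 (m : ℝ) :=
      Real.logb_le_logb_of_le (by norm_num) (by exact_mod_cast Rpos n)
        (by exact_mod_cast hRnm)
    linarith
  -- upper bound on logb m
  have hup : Real.logb 2 (m : ℝ) < (1 + δ) * (1 + δ) * Real.logb 2 (n : ℝ) := by
    have ha : Real.logb 2 (Rn x (n + 1) : ℝ) < (1 + δ) * Real.logb 2 ((n : ℝ) + 1) := by
      have := h2.1
      rw [← div_lt_iff₀ hL'pos]
      have hcast : ((n + 1 : ℕ) : ℝ) = (n : ℝ) + 1 := by push_cast; ring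
      rw [← hcast]
      linarith
    have hb : Real.logb 2 (m : ℝ) ≤ Real.logb 2 (Rn x (n + 1) : ℝ) :=
      Real.logb_le_logb_of_le (by norm_num) hmpos (by exact_mod_cast le_of_lt hmR)
    have hc : (1 + δ) * Real.logb 2 ((n : ℝ) + 1) ≤ (1 + δ) * (1 + δ) * Real.logb 2 (n : ℝ) := by
      nlinarith [hL', hδL, hδ.le]
    linarith
  -- conclude
  rw [Real.dist_eq, abs_sub_lt_iff]
  constructor
  · have : Real.logb 2 (m : ℝ) / Real.logb 2 (n : ℝ) < (1 + δ) * (1 + δ) :=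
      (div_lt_iff₀ hLpos).mpr (by linarith)
    nlinarith
  · have : (1 - δ) < Real.logb 2 (m : ℝ) / Real.logb 2 (n : ℝ) :=
      (lt_div_iff₀ hLpos).mpr hlow
    linarith
end
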